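/- arXiv:2509.02742 — 4 statements merged into one kernel-verified Lean document; each statement's English description precedes it below -/
import Mathlib

section
/- Let a > 0. A C^2 function u on (0,infinity) satisfies (u''(r))^2 + (a/r^2)*(u'(r))^2 = (1/(a+1)) * (u''(r) + (a/r)*u'(r))^2 for all r > 0 if and only if u(r) = alpha*r^2 + gamma for some real constants alpha, gamma. -/
/-!
Since `(a + 1) (x² + a y² / r²) - (x + a y / r)² = a (x - y / r)²`, the equality case of this
Cauchy–Schwarz-type bound is exactly the Euler equation `u'' = u' / r`, i.e. `(u' / r)' = 0`.
Hence `u' = 2 α r` and `u = α r² + γ` on the connected set `(0, ∞)`.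
-/

open Set

lemma sq_add_div_sq_mul_sq_eq_iff {a r x y : ℝ} (ha : a ≠ 0) (ha1 : a + 1 ≠ 0) (hr : r ≠ 0) :
    x ^ 2 + a / r ^ 2 * y ^ 2 = 1 / (a + 1) * (x + a / r * y) ^ 2 ↔ x = y / r := by
  have hdefect : x ^ 2 + a / r ^ 2 * y ^ 2 - 1 / (a + 1) * (x + a / r * y) ^ 2
      = a / (a + 1) * (x - y / r) ^ 2 := by
    field_simp
    ring
  rw [← sub_eq_zero, hdefect, mul_eq_zero, div_eq_zero_iff, pow_eq_zero_iff two_ne_zero,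
    sub_eq_zero]
  simp [ha, ha1]

lemma exists_const_mul_of_deriv_eq_div {f : ℝ → ℝ} (hf : DifferentiableOn ℝ f (Ioi 0))
    (h : ∀ r ∈ Ioi 0, deriv f r = f r / r) : ∃ c, ∀ r ∈ Ioi 0, f r = c * r := by
  have hquot : DifferentiableOn ℝ (f / id) (Ioi 0) :=
    hf.div differentiableOn_id fun _ hr => ne_of_gt hr
  obtain ⟨c, hc⟩ := isOpen_Ioi.exists_is_const_of_deriv_eq_zero isPreconnected_Ioi hquot
    fun r (hr : 0 < r) => by
      have hfr := (hf.differentiableAt (isOpen_Ioi.mem_nhds hr)).hasDerivAt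
      rw [(hfr.div (hasDerivAt_id r) hr.ne').deriv, h r hr]
      field_simp
      simp
  exact ⟨c, fun r (hr : 0 < r) => by rw [← hc r hr, Pi.div_apply, id, div_mul_cancel₀ _ hr.ne']⟩

lemma exists_mul_sq_add_of_deriv_deriv_eq_div {u : ℝ → ℝ}
    (hu : DifferentiableOn ℝ u (Ioi 0)) (hu' : DifferentiableOn ℝ (deriv u) (Ioi 0))
    (h : ∀ r ∈ Ioi 0, deriv (deriv u) r = deriv u r / r) :
    ∃ α γ : ℝ, ∀ r ∈ Ioi 0, u r = α * r ^ 2 + γ := by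
  obtain ⟨c, hc⟩ := exists_const_mul_of_deriv_eq_div hu' h
  obtain ⟨γ, hγ⟩ := isOpen_Ioi.exists_eq_add_of_deriv_eq isPreconnected_Ioi hu
    (g := fun r => c / 2 * r ^ 2) (by fun_prop) fun r hr => by
      rw [hc r hr, ((hasDerivAt_pow 2 r).const_mul (c / 2)).deriv]
      ring
  exact ⟨c / 2, γ, hγ⟩

lemma deriv_eq_and_deriv_deriv_eq_of_mul_sq_add {u : ℝ → ℝ} {α γ : ℝ}
    (h : ∀ r ∈ Ioi 0, u r = α * r ^ 2 + γ) {r : ℝ} (hr : r ∈ Ioi 0) :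
    deriv u r = 2 * α * r ∧ deriv (deriv u) r = 2 * α := by
  have hu' : EqOn (deriv u) (fun r => 2 * α * r) (Ioi 0) := fun s hs => by
    rw [(show EqOn u _ (Ioi 0) from h).deriv isOpen_Ioi hs,
      (((hasDerivAt_pow 2 s).const_mul α).add_const γ).deriv]
    ring
  refine ⟨hu' hr, ?_⟩
  rw [hu'.deriv isOpen_Ioi hr]
  simp

theorem stmt_2 (a : ℝ) (ha : 0 < a) (u : ℝ → ℝ)
    (hu : ContDiffOn ℝ 2 u (Ioi 0)) :
    (∀ r ∈ Ioi (0 : ℝ),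
        (deriv (deriv u) r) ^ 2 + (a / r ^ 2) * (deriv u r) ^ 2 =
          (1 / (a + 1)) * (deriv (deriv u) r + (a / r) * deriv u r) ^ 2) ↔
      ∃ α γ : ℝ, ∀ r ∈ Ioi (0 : ℝ), u r = α * r ^ 2 + γ := by
  have hEuler : ∀ r ∈ Ioi (0 : ℝ), ((deriv (deriv u) r) ^ 2 + (a / r ^ 2) * (deriv u r) ^ 2 =
      (1 / (a + 1)) * (deriv (deriv u) r + (a / r) * deriv u r) ^ 2 ↔
        deriv (deriv u) r = deriv u r / r) := fun r hr =>
    sq_add_div_sq_mul_sq_eq_iff ha.ne' (by positivity) (ne_of_gt hr)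
  refine ⟨fun h => ?_, fun ⟨α, γ, h⟩ r hr => ?_⟩
  · exact exists_mul_sq_add_of_deriv_deriv_eq_div (hu.differentiableOn two_ne_zero)
      ((hu.deriv_of_isOpen isOpen_Ioi le_rfl).differentiableOn one_ne_zero)
      fun r hr => (hEuler r hr).1 (h r hr)
  · obtain ⟨hu', hu''⟩ := deriv_eq_and_deriv_deriv_eq_of_mul_sq_add h hr
    rw [hEuler r hr, hu', hu'']
    field_simp [ne_of_gt (show (0:ℝ) < r from hr)]
end

section
/- Let Omega be an open subset of (0,infinity) x R^k and u in C^3(Omega) solve L_a u = -1. Then the function P_a = |grad u|^2 + (2/(a+1+k)) u satisfies L_a P_a >= 0 in Omega. -/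
/-! Differentiating `L_a u = -1` and using the commutator `∂_i L_a = L_a ∂_i - δ_{i0} (a/r²) ∂_r`
gives the Bochner-type identity `L_a |∇u|² = 2 |D²u|² + 2a (u_r/r)²`. Since
`|D²u|² ≥ (Δu)²/(k+1)` and `Δu + a u_r/r = -1`, the weighted Cauchy–Schwarz inequality
`(s + a b)² ≤ (s²/(k+1) + a b²)(k+1+a)` gives `|D²u|² + a (u_r/r)² ≥ 1/(a+1+k)`, that is,
`L_a P_a ≥ 0`. -/

open Set Finset

/-- Partial derivative of `u` in the `i`-th coordinate direction. -/
noncomputable def pd {n : ℕ} (i : Fin n) (u : (Fin n → ℝ) → ℝ) (x : Fin n → ℝ) : ℝ :=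
  fderiv ℝ u x (Pi.single i 1)

/-- The Weinstein operator `L_a u = ∂_rr u + (a/r) ∂_r u + Δ_y u` on `ℝ^+ × ℝ^k`,
where `r = x 0` and `y = (x 1, …, x k)`. -/
noncomputable def weinstein {k : ℕ} (a : ℝ) (u : (Fin (k + 1) → ℝ) → ℝ)
    (x : Fin (k + 1) → ℝ) : ℝ :=
  (∑ i, pd i (pd i u) x) + (a / x 0) * pd 0 u x

open Filter Topology

section PartialDerivative

variable {n : ℕ} {f g : (Fin n → ℝ) → ℝ} {x : Fin n → ℝ}

theorem ContDiffAt.pd {m l : WithTop ℕ∞} (i : Fin n) (hf : ContDiffAt ℝ l f x)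
    (hml : m + 1 ≤ l) : ContDiffAt ℝ m (pd i f) x :=
  (hf.fderiv_right hml).clm_apply contDiffAt_const

theorem Filter.EventuallyEq.pd_eq (h : f =ᶠ[𝓝 x] g) (i : Fin n) : pd i f x = pd i g x := by
  rw [pd, pd, h.fderiv_eq]

theorem pd_const (i : Fin n) (c : ℝ) : pd i (fun _ => c) x = 0 := by
  simp [pd]

theorem pd_add (i : Fin n) (hf : DifferentiableAt ℝ f x) (hg : DifferentiableAt ℝ g x) :
    pd i (fun z => f z + g z) x = pd i f x + pd i g x := by
  simp [pd, fderiv_fun_add hf hg]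

theorem pd_const_mul (i : Fin n) (c : ℝ) (hf : DifferentiableAt ℝ f x) :
    pd i (fun z => c * f z) x = c * pd i f x := by
  simp [pd, fderiv_const_mul hf]

theorem pd_mul (i : Fin n) (hf : DifferentiableAt ℝ f x) (hg : DifferentiableAt ℝ g x) :
    pd i (fun z => f z * g z) x = pd i f x * g x + f x * pd i g x := by
  simp [pd, fderiv_fun_mul hf hg]
  ring

theorem pd_sq (i : Fin n) (hf : DifferentiableAt ℝ f x) :
    pd i (fun z => f z ^ 2) x = 2 * (f x * pd i f x) := by
  simp only [sq, pd_mul i hf hf]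
  ring

theorem pd_sum {ι : Type*} (s : Finset ι) {F : ι → (Fin n → ℝ) → ℝ} (i : Fin n)
    (hF : ∀ j ∈ s, DifferentiableAt ℝ (F j) x) :
    pd i (fun z => ∑ j ∈ s, F j z) x = ∑ j ∈ s, pd i (F j) x := by
  simp [pd, fderiv_fun_sum hF]

theorem pd_comm (hf : ContDiffAt ℝ 2 f x) (i j : Fin n) :
    pd i (pd j f) x = pd j (pd i f) x := by
  have hd : DifferentiableAt ℝ (fderiv ℝ f) x :=
    (hf.fderiv_right (m := 1) le_rfl).differentiableAt one_ne_zero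
  have hpd : ∀ v w : Fin n → ℝ,
      fderiv ℝ (fun z => fderiv ℝ f z w) x v = fderiv ℝ (fderiv ℝ f) x v w := fun v w => by
    simp [fderiv_clm_apply hd (differentiableAt_const w)]
  unfold pd
  rw [hpd, hpd, hf.isSymmSndFDerivAt (by simp)]

theorem pd_const_div_apply (c : ℝ) {j : Fin n} (hx : x j ≠ 0) (i : Fin n) :
    pd i (fun z => c / z j) x = if i = j then -(c / x j ^ 2) else 0 := by
  have h : HasFDerivAt (fun z : Fin n → ℝ => c / z j)
      (-((c * (x j ^ 2)⁻¹) • ContinuousLinearMap.proj (R := ℝ) j)) x := by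
    have hinv : HasDerivAt (fun t : ℝ => c * t⁻¹) (c * -(x j ^ 2)⁻¹) (x j) :=
      (hasDerivAt_inv hx).const_mul c
    simpa [Function.comp_def, div_eq_mul_inv] using
      hinv.comp_hasFDerivAt x (hasFDerivAt_apply (𝕜 := ℝ) j x)
  rw [pd, h.fderiv]
  split_ifs with hij
  · subst hij; simp [div_eq_mul_inv]
  · simp [Pi.single_eq_of_ne (Ne.symm hij)]

theorem pd_comm_eventuallyEq (hf : ContDiffAt ℝ 3 f x) (i j : Fin n) :
    pd i (pd j f) =ᶠ[𝓝 x] pd j (pd i f) := by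
  filter_upwards [hf.eventually (by simp)] with z hz
  exact pd_comm (hz.of_le (by norm_num)) i j

theorem pd_pd_add (hf : ContDiffAt ℝ 2 f x) (hg : ContDiffAt ℝ 2 g x) (i j : Fin n) :
    pd i (pd j (fun z => f z + g z)) x = pd i (pd j f) x + pd i (pd j g) x := by
  have h : pd j (fun z => f z + g z) =ᶠ[𝓝 x] fun z => pd j f z + pd j g z := by
    filter_upwards [hf.eventually (by simp), hg.eventually (by simp)] with z hfz hgz
    exact pd_add j (hfz.differentiableAt two_ne_zero) (hgz.differentiableAt two_ne_zero)
  rw [h.pd_eq, pd_add i ((hf.pd j (m := 1) le_rfl).differentiableAt one_ne_zero)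
    ((hg.pd j (m := 1) le_rfl).differentiableAt one_ne_zero)]

theorem pd_pd_const_mul (c : ℝ) (hf : ContDiffAt ℝ 2 f x) (i j : Fin n) :
    pd i (pd j (fun z => c * f z)) x = c * pd i (pd j f) x := by
  have h : pd j (fun z => c * f z) =ᶠ[𝓝 x] fun z => c * pd j f z := by
    filter_upwards [hf.eventually (by simp)] with z hz
    exact pd_const_mul j c (hz.differentiableAt two_ne_zero)
  rw [h.pd_eq, pd_const_mul i c ((hf.pd j (m := 1) le_rfl).differentiableAt one_ne_zero)]

theorem pd_pd_sum {ι : Type*} (s : Finset ι) {F : ι → (Fin n → ℝ) → ℝ}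
    (hF : ∀ l ∈ s, ContDiffAt ℝ 2 (F l) x) (i j : Fin n) :
    pd i (pd j (fun z => ∑ l ∈ s, F l z)) x = ∑ l ∈ s, pd i (pd j (F l)) x := by
  have h : pd j (fun z => ∑ l ∈ s, F l z) =ᶠ[𝓝 x] fun z => ∑ l ∈ s, pd j (F l) z := by
    filter_upwards [(s.eventually_all).2 fun l hl => (hF l hl).eventually (by simp)] with z hz
    exact pd_sum s j fun l hl => (hz l hl).differentiableAt two_ne_zero
  rw [h.pd_eq, pd_sum s i fun l hl => ((hF l hl).pd j (m := 1) le_rfl).differentiableAt one_ne_zero]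

theorem pd_pd_sq (hf : ContDiffAt ℝ 2 f x) (i : Fin n) :
    pd i (pd i (fun z => f z ^ 2)) x = 2 * (pd i f x ^ 2 + f x * pd i (pd i f) x) := by
  have h : pd i (fun z => f z ^ 2) =ᶠ[𝓝 x] fun z => 2 * (f z * pd i f z) := by
    filter_upwards [hf.eventually (by simp)] with z hz
    exact pd_sq i (hz.differentiableAt two_ne_zero)
  have hf1 : DifferentiableAt ℝ f x := hf.differentiableAt two_ne_zero
  have hpf1 : DifferentiableAt ℝ (pd i f) x :=
    (hf.pd i (m := 1) le_rfl).differentiableAt one_ne_zero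
  rw [h.pd_eq, pd_const_mul (f := fun z => f z * pd i f z) i 2 (hf1.mul hpf1),
    pd_mul i hf1 hpf1, sq]

end PartialDerivative

section Weinstein

variable {k : ℕ} (a : ℝ) {f g u : (Fin (k + 1) → ℝ) → ℝ} {x : Fin (k + 1) → ℝ}

theorem weinstein_add (hf : ContDiffAt ℝ 2 f x) (hg : ContDiffAt ℝ 2 g x) :
    weinstein a (fun z => f z + g z) x = weinstein a f x + weinstein a g x := by
  simp only [weinstein, pd_pd_add hf hg, Finset.sum_add_distrib,
    pd_add 0 (hf.differentiableAt two_ne_zero) (hg.differentiableAt two_ne_zero)]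
  ring

theorem weinstein_const_mul (c : ℝ) (hf : ContDiffAt ℝ 2 f x) :
    weinstein a (fun z => c * f z) x = c * weinstein a f x := by
  simp only [weinstein, pd_pd_const_mul c hf, ← Finset.mul_sum,
    pd_const_mul 0 c (hf.differentiableAt two_ne_zero)]
  ring

theorem weinstein_sum {ι : Type*} (s : Finset ι) {F : ι → (Fin (k + 1) → ℝ) → ℝ}
    (hF : ∀ l ∈ s, ContDiffAt ℝ 2 (F l) x) :
    weinstein a (fun z => ∑ l ∈ s, F l z) x = ∑ l ∈ s, weinstein a (F l) x := by
  simp only [weinstein, pd_pd_sum s hF, Finset.sum_add_distrib, ← Finset.mul_sum,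
    pd_sum s 0 fun l hl => (hF l hl).differentiableAt two_ne_zero]
  rw [Finset.sum_comm]

theorem weinstein_sq (hf : ContDiffAt ℝ 2 f x) :
    weinstein a (fun z => f z ^ 2) x = 2 * f x * weinstein a f x + 2 * ∑ i, pd i f x ^ 2 := by
  simp only [weinstein, pd_pd_sq hf, pd_sq 0 (hf.differentiableAt two_ne_zero), ← Finset.mul_sum,
    Finset.sum_add_distrib]
  ring

theorem pd_weinstein (hu : ContDiffAt ℝ 3 u x) (hx : x 0 ≠ 0) (i : Fin (k + 1)) :
    pd i (weinstein a u) x =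
      weinstein a (pd i u) x - if i = 0 then a / x 0 ^ 2 * pd 0 u x else 0 := by
  have hu1 : ∀ j, DifferentiableAt ℝ (pd j u) x := fun j =>
    (hu.pd j (m := 2) le_rfl).differentiableAt two_ne_zero
  have hu2 : ∀ j l, DifferentiableAt ℝ (pd l (pd j u)) x := fun j l =>
    ((hu.pd j (m := 2) le_rfl).pd l (m := 1) le_rfl).differentiableAt one_ne_zero
  have hcoef : DifferentiableAt ℝ (fun z : Fin (k + 1) → ℝ => a / z 0) x := by
    fun_prop (disch := exact hx)
  have hcomm : ∀ j, pd i (pd j (pd j u)) x = pd j (pd j (pd i u)) x := fun j => by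
    rw [pd_comm (hu.pd j (m := 2) le_rfl) i j, (pd_comm_eventuallyEq hu i j).pd_eq]
  change pd i (fun z => (∑ j, pd j (pd j u) z) + a / z 0 * pd 0 u z) x = _
  rw [pd_add (f := fun z => ∑ j, pd j (pd j u) z) (g := fun z => a / z 0 * pd 0 u z) i
      (DifferentiableAt.fun_sum fun j _ => hu2 j j) (hcoef.mul (hu1 0)),
    pd_sum _ i fun j _ => hu2 j j, pd_mul i hcoef (hu1 0), pd_const_div_apply a hx,
    pd_comm (hu.of_le (by norm_num)) i 0]
  simp only [weinstein, hcomm]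
  split_ifs <;> ring

theorem weinstein_sum_sq_pd (hu : ContDiffAt ℝ 3 u x) (hx : x 0 ≠ 0) :
    weinstein a (fun z => ∑ i, pd i u z ^ 2) x =
      2 * ∑ i, ∑ j, pd j (pd i u) x ^ 2 + 2 * ∑ i, pd i u x * pd i (weinstein a u) x
        + 2 * a * (pd 0 u x / x 0) ^ 2 := by
  have hu2 : ∀ i, ContDiffAt ℝ 2 (pd i u) x := fun i => hu.pd i le_rfl
  rw [weinstein_sum a _ fun i _ => (hu2 i).pow 2]
  simp only [weinstein_sq a (hu2 _), pd_weinstein a hu hx, mul_sub, mul_ite, mul_zero,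
    Finset.sum_sub_distrib, Finset.sum_ite_eq', Finset.mem_univ, if_true, Finset.sum_add_distrib,
    mul_assoc, ← Finset.mul_sum]
  ring

end Weinstein

theorem sq_add_mul_div_le {a m : ℝ} (ha : 0 ≤ a) (hm : 0 < m) (s b : ℝ) :
    (s + a * b) ^ 2 / (m + a) ≤ s ^ 2 / m + a * b ^ 2 := by
  rw [div_le_iff₀ (by positivity)]
  have key : (s ^ 2 / m + a * b ^ 2) * (m + a) - (s + a * b) ^ 2 = a * (s - m * b) ^ 2 / m := by
    field_simp
    ring
  nlinarith [div_nonneg (mul_nonneg ha (sq_nonneg (s - m * b))) hm.le]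

theorem sq_sum_diag_le {m : ℕ} (h : Fin m → Fin m → ℝ) :
    (∑ i, h i i) ^ 2 ≤ m * ∑ i, ∑ j, h i j ^ 2 := by
  calc (∑ i, h i i) ^ 2 ≤ m * ∑ i, h i i ^ 2 := by
        simpa using sq_sum_le_card_mul_sum_sq (s := Finset.univ) (f := fun i => h i i)
    _ ≤ m * ∑ i, ∑ j, h i j ^ 2 := by
        gcongr with i
        exact Finset.single_le_sum (f := fun j => h i j ^ 2) (fun j _ => sq_nonneg _)
          (Finset.mem_univ i)

theorem stmt_6 (a : ℝ) (ha : 0 ≤ a) (k : ℕ)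
    (Ω : Set (Fin (k + 1) → ℝ)) (hΩopen : IsOpen Ω)
    (hΩ : Ω ⊆ {x : Fin (k + 1) → ℝ | 0 < x 0})
    (u : (Fin (k + 1) → ℝ) → ℝ) (hu : ContDiffOn ℝ 3 u Ω)
    (heq : ∀ x ∈ Ω, weinstein a u x = -1) :
    ∀ x ∈ Ω,
      weinstein a (fun z => (∑ i, (pd i u z) ^ 2) + (2 / (a + 1 + k)) * u z) x ≥ 0 := by
  intro x hx
  have hx0 : x 0 ≠ 0 := (hΩ hx).ne'
  have hux : ContDiffAt ℝ 3 u x := hu.contDiffAt (hΩopen.mem_nhds hx)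
  have hu2 : ContDiffAt ℝ 2 u x := hux.of_le (by norm_num)
  have hgrad : ContDiffAt ℝ 2 (fun z => ∑ i, pd i u z ^ 2) x :=
    ContDiffAt.sum fun i _ => (hux.pd i le_rfl).pow 2
  have hLu_const : weinstein a u =ᶠ[𝓝 x] fun _ => -1 :=
    Filter.eventually_of_mem (hΩopen.mem_nhds hx) heq
  set Q := ∑ i, ∑ j, pd j (pd i u) x ^ 2
  set S := ∑ i, pd i (pd i u) x
  set b := pd 0 u x / x 0
  have hLP : weinstein a (fun z => (∑ i, pd i u z ^ 2) + 2 / (a + 1 + k) * u z) x =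
      2 * (Q + a * b ^ 2) - 2 / (a + 1 + k) := by
    rw [weinstein_add a hgrad (contDiffAt_const.mul hu2), weinstein_const_mul a _ hu2,
      weinstein_sum_sq_pd a hux hx0, heq x hx]
    simp only [hLu_const.pd_eq, pd_const, mul_zero, Finset.sum_const_zero]
    ring
  have hSb : S + a * b = -1 := by
    rw [← heq x hx, weinstein]
    ring
  have hCS : S ^ 2 / (k + 1) ≤ Q := by
    rw [div_le_iff₀ (by positivity), mul_comm]
    exact_mod_cast sq_sum_diag_le fun i j => pd j (pd i u) x
  have hWCS := sq_add_mul_div_le ha (m := k + 1) (by positivity) S b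
  rw [hSb, neg_one_sq] at hWCS
  rw [hLP, ge_iff_le, sub_nonneg, div_eq_mul_one_div 2, show (a + 1 + k : ℝ) = k + 1 + a by ring]
  gcongr
  linarith
end

section
/- Let a >= 0 and u be a C^2 function on an open subset Omega of (0,infinity) x R^k solving L_a u = -1, i.e. div(r^a grad u) = -r^a. Let Z(x) = x be the radial vector field on R^{k+1}. Then pointwise in Omega: div( r^a*(|grad u|^2/2)*Z - r^a*(Zu)*grad u - r^a*u*Z ) = (a-1+k)*r^a*(|grad u|^2/2) - (a+1+k)*r^a*u. -/
/-!
Write `E = |∇u|²/2` and `P = E Z - (Zu) ∇u - u Z`. Since `∂ᵢ(Zu) = ∂ᵢu + Σⱼ xⱼ ∂ᵢ∂ⱼu`, the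
symmetry of the Hessian gives `∇(Zu) · ∇u = 2E + ZE`; together with `div (f Z) = Zf + (k+1) f`
this yields `div P = (k-1) E - (Zu)(Δu + 1) - (k+1) u`. The weight contributes
`div (r^a P) = a r^(a-1) P_r + r^a div P`, and substituting `Δu + 1 = -(a/r) ∂_r u` from the
equation cancels the two terms containing `Zu`.
-/

open Set Finset

/-- The generator of dilations, `Z f (x) = ⟨x, ∇f(x)⟩`. -/
noncomputable def dil {n : ℕ} (f : (Fin n → ℝ) → ℝ) (x : Fin n → ℝ) : ℝ :=
  ∑ i, x i * pd i f x

noncomputable def lap {n : ℕ} (u : (Fin n → ℝ) → ℝ) (x : Fin n → ℝ) : ℝ :=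
  ∑ i, pd i (pd i u) x

noncomputable def halfSqGrad {n : ℕ} (u : (Fin n → ℝ) → ℝ) (x : Fin n → ℝ) : ℝ :=
  (∑ j, pd j u x ^ 2) / 2

namespace pd

variable {n : ℕ} {f g u : (Fin n → ℝ) → ℝ} {x : Fin n → ℝ}

theorem fun_sub (i : Fin n) (hf : DifferentiableAt ℝ f x) (hg : DifferentiableAt ℝ g x) :
    pd i (fun z => f z - g z) x = pd i f x - pd i g x := by
  simp [pd, fderiv_fun_sub hf hg]

theorem fun_mul (i : Fin n) (hf : DifferentiableAt ℝ f x) (hg : DifferentiableAt ℝ g x) :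
    pd i (fun z => f z * g z) x = pd i f x * g x + f x * pd i g x := by
  simp only [pd, fderiv_fun_mul hf hg, add_apply, smul_apply, smul_eq_mul]
  ring

theorem fun_sum (i : Fin n) {ι : Type*} (s : Finset ι) {F : ι → (Fin n → ℝ) → ℝ}
    (hF : ∀ j ∈ s, DifferentiableAt ℝ (F j) x) :
    pd i (fun z => ∑ j ∈ s, F j z) x = ∑ j ∈ s, pd i (F j) x := by
  simp [pd, fderiv_fun_sum hF]

theorem fun_div_const (i : Fin n) (hf : DifferentiableAt ℝ f x) (c : ℝ) :
    pd i (fun z => f z / c) x = pd i f x / c := by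
  simp only [div_eq_mul_inv, pd, fderiv_mul_const hf]
  simp [mul_comm]

theorem coord (i j : Fin n) (x : Fin n → ℝ) :
    pd i (fun z => z j) x = if j = i then 1 else 0 := by
  simp [pd, (hasFDerivAt_apply j x).fderiv, Pi.single_apply]

theorem rpow_coord (a : ℝ) (p i : Fin n) (hx : x p ≠ 0) :
    pd i (fun z => z p ^ a) x = if p = i then a * x p ^ (a - 1) else 0 := by
  simp [pd, ((hasFDerivAt_apply p x).rpow_const (Or.inl hx)).fderiv, Pi.single_apply]

theorem eq_fderiv_fderiv (hu : ContDiffAt ℝ 2 u x) (i j : Fin n) :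
    pd i (pd j u) x = fderiv ℝ (fderiv ℝ u) x (Pi.single i 1) (Pi.single j 1) := by
  have hu' : DifferentiableAt ℝ (fderiv ℝ u) x :=
    (hu.fderiv_right (m := 1) (by norm_num)).differentiableAt one_ne_zero
  change fderiv ℝ (fun y => fderiv ℝ u y (Pi.single j 1)) x (Pi.single i 1) = _
  simp [fderiv_clm_apply hu' (differentiableAt_const _)]

theorem comm (hu : ContDiffAt ℝ 2 u x) (i j : Fin n) : pd i (pd j u) x = pd j (pd i u) x := by
  rw [eq_fderiv_fderiv hu, eq_fderiv_fderiv hu]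
  exact hu.isSymmSndFDerivAt (by simp) _ _

theorem differentiableAt (hu : ContDiffAt ℝ 2 u x) (j : Fin n) :
    DifferentiableAt ℝ (pd j u) x :=
  ((hu.fderiv_right (m := 1) (by norm_num)).differentiableAt one_ne_zero).clm_apply
    (differentiableAt_const _)

end pd

noncomputable def pohozaevField {n : ℕ} (u : (Fin n → ℝ) → ℝ) (i : Fin n) (z : Fin n → ℝ) : ℝ :=
  halfSqGrad u z * z i - dil u z * pd i u z - u z * z i

section VectorFields

variable {n : ℕ} {f g u : (Fin n → ℝ) → ℝ} {x : Fin n → ℝ}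

theorem differentiableAt_dil (hu : ContDiffAt ℝ 2 u x) : DifferentiableAt ℝ (dil u) x :=
  DifferentiableAt.fun_sum fun j _ => (differentiableAt_apply j x).fun_mul (pd.differentiableAt hu j)

theorem differentiableAt_halfSqGrad (hu : ContDiffAt ℝ 2 u x) :
    DifferentiableAt ℝ (halfSqGrad u) x :=
  show DifferentiableAt ℝ (fun z => (∑ j, pd j u z ^ 2) / 2) x by
  simpa only [div_eq_mul_inv] using
    (DifferentiableAt.fun_sum fun j _ => (pd.differentiableAt hu j).fun_pow 2).mul_const (2⁻¹ : ℝ)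

theorem differentiableAt_pohozaevField (hu : ContDiffAt ℝ 2 u x) (i : Fin n) :
    DifferentiableAt ℝ (pohozaevField u i) x :=
  (((differentiableAt_halfSqGrad hu).fun_mul (differentiableAt_apply i x)).fun_sub
    ((differentiableAt_dil hu).fun_mul (pd.differentiableAt hu i))).fun_sub
    ((hu.differentiableAt (by norm_num)).fun_mul (differentiableAt_apply i x))

theorem pd_dil (hu : ContDiffAt ℝ 2 u x) (i : Fin n) :
    pd i (dil u) x = pd i u x + ∑ j, x j * pd i (pd j u) x := by
  change pd i (fun z => ∑ j, z j * pd j u z) x = _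
  rw [pd.fun_sum i _ fun j _ => (differentiableAt_apply j x).fun_mul (pd.differentiableAt hu j)]
  simp [pd.fun_mul i (differentiableAt_apply _ x) (pd.differentiableAt hu _), pd.coord,
    sum_add_distrib]

theorem pd_halfSqGrad (hu : ContDiffAt ℝ 2 u x) (i : Fin n) :
    pd i (halfSqGrad u) x = ∑ j, pd j u x * pd i (pd j u) x := by
  have hsq : ∀ j, pd i (fun z => pd j u z ^ 2) x = 2 * (pd j u x * pd i (pd j u) x) := fun j => by
    simp only [sq, pd.fun_mul i (pd.differentiableAt hu j) (pd.differentiableAt hu j)]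
    ring
  change pd i (fun z => (∑ j, pd j u z ^ 2) / 2) x = _
  rw [pd.fun_div_const i (DifferentiableAt.fun_sum fun j _ => (pd.differentiableAt hu j).fun_pow 2),
    pd.fun_sum i _ fun j _ => (pd.differentiableAt hu j).fun_pow 2, sum_congr rfl fun j _ => hsq j,
    ← mul_sum]
  ring

theorem sum_pd_mul_coord (hf : DifferentiableAt ℝ f x) :
    ∑ i, pd i (fun z => f z * z i) x = dil f x + n * f x := by
  simp [pd.fun_mul _ hf (differentiableAt_apply _ x), pd.coord, sum_add_distrib, dil, mul_comm]

theorem sum_pd_mul_pd (hg : DifferentiableAt ℝ g x) (hu : ContDiffAt ℝ 2 u x) :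
    ∑ i, pd i (fun z => g z * pd i u z) x = ∑ i, pd i g x * pd i u x + g x * lap u x := by
  simp [pd.fun_mul _ hg (pd.differentiableAt hu _), sum_add_distrib, lap, mul_sum]

theorem sum_pd_dil_mul_pd (hu : ContDiffAt ℝ 2 u x) :
    ∑ i, pd i (dil u) x * pd i u x = 2 * halfSqGrad u x + dil (halfSqGrad u) x := by
  simp only [pd_dil hu, pd_halfSqGrad hu, add_mul, sum_add_distrib, halfSqGrad, dil, sum_mul,
    mul_sum]
  rw [sum_comm]
  congr 1
  · simp only [sq]
    ring
  · refine sum_congr rfl fun i _ => sum_congr rfl fun j _ => ?_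
    rw [pd.comm hu]
    ring

theorem sum_pd_pohozaevField (hu : ContDiffAt ℝ 2 u x) :
    ∑ i, pd i (pohozaevField u i) x
      = (n - 2) * halfSqGrad u x - dil u x * (lap u x + 1) - n * u x := by
  have hE := differentiableAt_halfSqGrad hu
  have hZu := differentiableAt_dil hu
  have hu₁ : DifferentiableAt ℝ u x := hu.differentiableAt (by norm_num)
  calc ∑ i, pd i (pohozaevField u i) x
      = ∑ i, pd i (fun z => halfSqGrad u z * z i) x
          - ∑ i, pd i (fun z => dil u z * pd i u z) x - ∑ i, pd i (fun z => u z * z i) x := by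
        simp only [← sum_sub_distrib]
        refine sum_congr rfl fun i _ => ?_
        change pd i (fun z => halfSqGrad u z * z i - dil u z * pd i u z - u z * z i) x = _
        rw [pd.fun_sub i ((hE.fun_mul (differentiableAt_apply i x)).fun_sub
            (hZu.fun_mul (pd.differentiableAt hu i))) (hu₁.fun_mul (differentiableAt_apply i x)),
          pd.fun_sub i (hE.fun_mul (differentiableAt_apply i x))
            (hZu.fun_mul (pd.differentiableAt hu i))]
    _ = _ := by
        rw [sum_pd_mul_coord hE, sum_pd_mul_pd hZu hu, sum_pd_mul_coord hu₁, sum_pd_dil_mul_pd hu]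
        ring

theorem sum_pd_rpow_coord_mul (a : ℝ) (p : Fin n) (hx : x p ≠ 0)
    {V : Fin n → (Fin n → ℝ) → ℝ} (hV : ∀ i, DifferentiableAt ℝ (V i) x) :
    ∑ i, pd i (fun z => z p ^ a * V i z) x
      = a * x p ^ (a - 1) * V p x + x p ^ a * ∑ i, pd i (V i) x := by
  simp [pd.fun_mul _ ((differentiableAt_apply p x).rpow_const (Or.inl hx)) (hV _),
    pd.rpow_coord a p _ hx, sum_add_distrib, mul_sum]

end VectorFields

theorem stmt_16_general (a : ℝ) (k : ℕ)
    (Ω : Set (Fin (k + 1) → ℝ)) (hΩopen : IsOpen Ω)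
    (hΩ : Ω ⊆ {x : Fin (k + 1) → ℝ | 0 < x 0})
    (u : (Fin (k + 1) → ℝ) → ℝ) (hu : ContDiffOn ℝ 2 u Ω)
    (heq : ∀ x ∈ Ω, weinstein a u x = -1) :
    ∀ x ∈ Ω,
      (∑ i, pd i (fun z =>
          (z 0) ^ a * ((∑ j, (pd j u z) ^ 2) / 2) * z i
            - (z 0) ^ a * dil u z * pd i u z
            - (z 0) ^ a * u z * z i) x) =
        (a - 1 + k) * (x 0) ^ a * ((∑ j, (pd j u x) ^ 2) / 2)
          - (a + 1 + k) * (x 0) ^ a * u x := by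
  intro x hx
  have hx₀ : x 0 ≠ 0 := (hΩ hx).ne'
  have hu₂ : ContDiffAt ℝ 2 u x := hu.contDiffAt (hΩopen.mem_nhds hx)
  have hlap : lap u x = -1 - a / x 0 * pd 0 u x := by
    linarith [show lap u x + a / x 0 * pd 0 u x = -1 from heq x hx]
  calc _ = ∑ i, pd i (fun z => z 0 ^ a * pohozaevField u i z) x := by
        congr! 3 with i z
        simp only [pohozaevField, halfSqGrad]
        ring
    _ = a * x 0 ^ (a - 1) * pohozaevField u 0 x + x 0 ^ a * ∑ i, pd i (pohozaevField u i) x :=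
        sum_pd_rpow_coord_mul a 0 hx₀ (differentiableAt_pohozaevField hu₂)
    _ = (a - 1 + k) * x 0 ^ a * halfSqGrad u x - (a + 1 + k) * x 0 ^ a * u x := by
        rw [sum_pd_pohozaevField hu₂, hlap, Real.rpow_sub_one hx₀, pohozaevField]
        push_cast
        field_simp
        ring

theorem stmt_16 (a : ℝ) (ha : 0 ≤ a) (k : ℕ)
    (Ω : Set (Fin (k + 1) → ℝ)) (hΩopen : IsOpen Ω)
    (hΩ : Ω ⊆ {x : Fin (k + 1) → ℝ | 0 < x 0})
    (u : (Fin (k + 1) → ℝ) → ℝ) (hu : ContDiffOn ℝ 2 u Ω)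
    (heq : ∀ x ∈ Ω, weinstein a u x = -1) :
    ∀ x ∈ Ω,
      (∑ i, pd i (fun z =>
          (z 0) ^ a * ((∑ j, (pd j u z) ^ 2) / 2) * z i
            - (z 0) ^ a * dil u z * pd i u z
            - (z 0) ^ a * u z * z i) x) =
        (a - 1 + k) * (x 0) ^ a * ((∑ j, (pd j u x) ^ 2) / 2)
          - (a + 1 + k) * (x 0) ^ a * u x :=
  stmt_16_general a k Ω hΩopen hΩ u hu heq
end

section
/- Let a != 0, R > 0, b_0 < b_1, and D = (0,R) x (b_0,b_1)^k. Suppose u in C^2(D) cap C^1(closure of D) satisfies L_a u = g in D with g in L^1(D), where L_a u = u_{rr} + (a/r)u_r + Delta_y u. Then for every y in (b_0,b_1)^k, the limit as r tends to 0+ of u_r(r,y) exists and equals 0. -/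
open Set Finset MeasureTheory Filter

/-- Partial derivative within a set `s` of `u` in the `i`-th coordinate direction. -/
noncomputable def pdWithin {n : ℕ} (s : Set (Fin n → ℝ)) (i : Fin n)
    (u : (Fin n → ℝ) → ℝ) (x : Fin n → ℝ) : ℝ :=
  fderivWithin ℝ u s x (Pi.single i 1)

open scoped Topology

/-!
Suppose `c := ∂_r u(0, y) ≠ 0`. By continuity of `∇u` up to `{r = 0}`, on a small box
`Q_ε = [ε, δ] × [y - δ, y + δ]^k` the function `∂_r u` stays within `|c|/2` of `c` and `∇u` stays
bounded. Integrating `L_a u = g` over `Q_ε`, the divergence theorem bounds `∫ Δu` by the boundary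
flux, uniformly in `ε`, and `∫ g` by `‖g‖_{L¹(D)}`; hence `|a| |∫_{Q_ε} ∂_r u / r|` is bounded.
But `c ∫_{Q_ε} ∂_r u / r ≥ (c²/2) (2δ)^k log(δ/ε) → ∞` as `ε → 0`.
-/

theorem abs_apply_single_le_opNorm {ι : Type*} [Fintype ι] [DecidableEq ι]
    (T : (ι → ℝ) →L[ℝ] ℝ) (i : ι) : |T (Pi.single i 1)| ≤ ‖T‖ := by
  simpa [Pi.norm_single] using T.le_opNorm (Pi.single i 1)

theorem sq_div_two_le_mul_apply_single {ι : Type*} [Fintype ι] [DecidableEq ι]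
    {T L : (ι → ℝ) →L[ℝ] ℝ} {i : ι} (h : ‖T - L‖ ≤ |L (Pi.single i 1)| / 2) :
    L (Pi.single i 1) ^ 2 / 2 ≤ L (Pi.single i 1) * T (Pi.single i 1) := by
  have hTL := (abs_apply_single_le_opNorm (T - L) i).trans h
  rw [sub_apply] at hTL
  set c := L (Pi.single i 1)
  have hcross : -(|c| * |T (Pi.single i 1) - c|) ≤ c * (T (Pi.single i 1) - c) := by
    rw [← abs_mul]; exact neg_abs_le _
  nlinarith [sq_abs c, abs_nonneg c]

theorem closure_pi_univ_Ioo {ι : Type*} {lo hi : ι → ℝ} (h : ∀ i, lo i < hi i) :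
    closure (univ.pi fun i => Ioo (lo i) (hi i)) = Icc lo hi := by
  rw [closure_pi_set, ← pi_univ_Icc]
  exact Set.pi_congr rfl fun i _ => closure_Ioo (h i).ne

theorem uniqueDiffOn_Icc_pi {ι : Type*} [Finite ι] {lo hi : ι → ℝ} (h : ∀ i, lo i < hi i) :
    UniqueDiffOn ℝ (Icc lo hi) :=
  pi_univ_Icc lo hi ▸ UniqueDiffOn.univ_pi fun i => uniqueDiffOn_Icc (h i)

theorem Icc_subset_closedBall_pi {ι : Type*} [Fintype ι] {p lo hi : ι → ℝ} {δ : ℝ} (hδ : 0 ≤ δ)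
    (hlo : ∀ i, p i - δ ≤ lo i) (hhi : ∀ i, hi i ≤ p i + δ) :
    Icc lo hi ⊆ Metric.closedBall p δ := by
  rw [closedBall_pi p hδ]
  simp only [Real.closedBall_eq_Icc]
  rw [pi_univ_Icc]
  exact Icc_subset_Icc hlo hhi

theorem eventually_mem_pi_Ioo_of_lt_apply_zero {k : ℕ} {lo hi : Fin (k + 1) → ℝ} {y : Fin k → ℝ}
    (h0 : lo 0 < hi 0) (hy : ∀ i, y i ∈ Ioo (lo i.succ) (hi i.succ)) :
    ∀ᶠ x in 𝓝 (Fin.cons (lo 0) y : Fin (k + 1) → ℝ), lo 0 < x 0 →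
      x ∈ univ.pi fun i => Ioo (lo i) (hi i) := by
  have hhi : ∀ᶠ x in 𝓝 (Fin.cons (lo 0) y : Fin (k + 1) → ℝ), x 0 < hi 0 :=
    (continuous_apply 0).continuousAt.eventually_lt continuousAt_const (by simpa using h0)
  have hsucc : ∀ᶠ x in 𝓝 (Fin.cons (lo 0) y : Fin (k + 1) → ℝ),
      ∀ i : Fin k, x i.succ ∈ Ioo (lo i.succ) (hi i.succ) :=
    eventually_all.2 fun i => (continuous_apply i.succ).continuousAt.preimage_mem_nhds
      (isOpen_Ioo.mem_nhds (by simpa using hy i))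
  filter_upwards [hhi, hsucc] with x hx0 hx hpos
  rw [mem_univ_pi, Fin.forall_fin_succ]
  exact ⟨⟨hpos, hx0⟩, hx⟩

theorem tendsto_finCons_nhdsWithin {k : ℕ} {D : Set (Fin (k + 1) → ℝ)} {y : Fin k → ℝ}
    (hyD : ∀ᶠ x in 𝓝 (Fin.cons 0 y : Fin (k + 1) → ℝ), 0 < x 0 → x ∈ D) :
    Tendsto (fun r : ℝ => (Fin.cons r y : Fin (k + 1) → ℝ)) (𝓝[>] 0) (𝓝[D] Fin.cons 0 y) := by
  have h : Tendsto (fun r : ℝ => (Fin.cons r y : Fin (k + 1) → ℝ)) (𝓝[>] 0)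
      (𝓝 (Fin.cons 0 y)) :=
    ((continuous_id.finCons continuous_const).tendsto 0).mono_left nhdsWithin_le_nhds
  refine tendsto_nhdsWithin_iff.2 ⟨h, ?_⟩
  filter_upwards [h.eventually hyD, self_mem_nhdsWithin] with r hr hr0 using hr hr0

theorem tendsto_fderiv_nhdsWithin_of_contDiffOn_closure {E F : Type*} [NormedAddCommGroup E]
    [NormedSpace ℝ E] [NormedAddCommGroup F] [NormedSpace ℝ F] {D : Set E} {u : E → F} {p : E}
    (hD : IsOpen D) (hcl : UniqueDiffOn ℝ (closure D)) (hu : ContDiffOn ℝ 1 u (closure D))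
    (hp : p ∈ closure D) :
    Tendsto (fderiv ℝ u) (𝓝[D] p) (𝓝 (fderivWithin ℝ u (closure D) p)) := by
  refine (((hu.continuousOn_fderivWithin hcl le_rfl) p hp).mono subset_closure).tendsto.congr' ?_
  filter_upwards [self_mem_nhdsWithin] with x hx
  exact fderivWithin_of_mem_nhds (mem_of_superset (hD.mem_nhds hx) subset_closure)

theorem volume_real_Icc_le_pow {ι : Type*} [Fintype ι] {l h : ι → ℝ} {S : ℝ} (hle : l ≤ h)
    (hS : ∀ i, h i - l i ≤ S) : volume.real (Icc l h) ≤ S ^ Fintype.card ι := by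
  rw [measureReal_def, Real.volume_Icc_pi_toReal hle, ← Finset.card_univ, ← Finset.prod_const]
  exact Finset.prod_le_prod (fun i _ => sub_nonneg.2 (hle i)) fun i _ => hS i

theorem volume_real_Icc_sub_add {ι : Type*} [Fintype ι] (y : ι → ℝ) {δ : ℝ} (hδ : 0 ≤ δ) :
    volume.real (Icc (fun i => y i - δ) (fun i => y i + δ)) = (2 * δ) ^ Fintype.card ι := by
  rw [measureReal_def, Real.volume_Icc_pi_toReal fun i => by linarith, ← Finset.card_univ,
    ← Finset.prod_const]
  exact Finset.prod_congr rfl fun i _ => by ring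

theorem setIntegral_Icc_cons_apply_zero {k : ℕ} (f : ℝ → ℝ) (a b : ℝ) (l h : Fin k → ℝ) :
    ∫ x in Icc (Fin.cons a l : Fin (k + 1) → ℝ) (Fin.cons b h), f (x 0) =
      (∫ t in Icc a b, f t) * volume.real (Icc l h) := by
  set e := MeasurableEquiv.piFinSuccAbove (fun _ : Fin (k + 1) => ℝ) 0
  have hpre : e ⁻¹' (Icc a b ×ˢ Icc l h) =
      Set.Icc (Fin.cons a l : Fin (k + 1) → ℝ) (Fin.cons b h) := by
    ext x
    simp [e, MeasurableEquiv.piFinSuccAbove_apply, Fin.le_cons, Fin.cons_le]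
  calc ∫ x in Icc (Fin.cons a l : Fin (k + 1) → ℝ) (Fin.cons b h), f (x 0)
      = ∫ x in e ⁻¹' (Icc a b ×ˢ Icc l h), f (e x).1 * (fun _ => (1 : ℝ)) (e x).2 := by
        rw [hpre]; simp only [mul_one]; rfl
    _ = ∫ p in Icc a b ×ˢ Icc l h, f p.1 * (fun _ => (1 : ℝ)) p.2 :=
        (volume_preserving_piFinSuccAbove (fun _ : Fin (k + 1) => ℝ) 0).setIntegral_preimage_emb
          e.measurableEmbedding (fun p : ℝ × (Fin k → ℝ) => f p.1 * (fun _ => (1 : ℝ)) p.2) _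
    _ = (∫ t in Icc a b, f t) * volume.real (Icc l h) := by
        rw [Measure.volume_eq_prod, setIntegral_prod_mul (μ := (volume : Measure ℝ))
          (ν := (volume : Measure (Fin k → ℝ))) f (fun _ => (1 : ℝ))]
        simp

theorem setIntegral_Icc_const_div {m ε δ : ℝ} (hε : 0 < ε) (hεδ : ε ≤ δ) :
    ∫ t in Icc ε δ, m / t = m * (Real.log δ - Real.log ε) := by
  have h0 : (0 : ℝ) ∉ uIcc ε δ := by
    rw [uIcc_of_le hεδ]; exact fun h => hε.not_ge h.1
  rw [integral_Icc_eq_integral_Ioc, ← intervalIntegral.integral_of_le hεδ]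
  simp only [div_eq_mul_inv, intervalIntegral.integral_const_mul]
  rw [integral_inv h0, Real.log_div (hε.trans_le hεδ).ne' hε.ne']

theorem exists_lt_mul_log_sub_log {K δ : ℝ} (hK : 0 < K) (hδ : 0 < δ) (C : ℝ) :
    ∃ ε ∈ Ioo 0 δ, C < K * (Real.log δ - Real.log ε) := by
  have hlim : Tendsto (fun ε => K * (Real.log δ - Real.log ε)) (𝓝[>] 0) atTop := by
    simp only [sub_eq_add_neg]
    exact (tendsto_atTop_add_const_left _ _
      (tendsto_neg_atBot_atTop.comp Real.tendsto_log_nhdsGT_zero)).const_mul_atTop hK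
  obtain ⟨ε, hC, hε⟩ := ((hlim.eventually_gt_atTop C).and (Ioo_mem_nhdsGT hδ)).exists
  exact ⟨ε, hε, hC⟩

theorem abs_setIntegral_insertNth_le {n : ℕ} {f : (Fin (n + 1) → ℝ) → ℝ}
    {lo hi : Fin (n + 1) → ℝ} {M S : ℝ} (hle : lo ≤ hi) (hS : ∀ j, hi j - lo j ≤ S)
    (hM : ∀ x ∈ Icc lo hi, |f x| ≤ M) (i : Fin (n + 1)) {z : ℝ} (hz : z ∈ Icc (lo i) (hi i)) :
    |∫ x in Icc (lo ∘ i.succAbove) (hi ∘ i.succAbove), f (i.insertNth z x)| ≤ M * S ^ n := by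
  have hM0 : 0 ≤ M := (abs_nonneg _).trans (hM lo ⟨le_rfl, hle⟩)
  calc _ ≤ M * volume.real (Icc (lo ∘ i.succAbove) (hi ∘ i.succAbove)) :=
        Real.norm_eq_abs _ ▸ norm_setIntegral_le_of_norm_le_const isCompact_Icc.measure_lt_top
          fun x hx => hM _ (Fin.insertNth_mem_Icc.2 ⟨hz, hx⟩)
    _ ≤ M * S ^ n := by
        gcongr
        simpa using volume_real_Icc_le_pow (l := lo ∘ i.succAbove) (h := hi ∘ i.succAbove)
          (fun j => hle _) fun j => hS _

theorem abs_setIntegral_divergence_le {n : ℕ} {f : Fin (n + 1) → (Fin (n + 1) → ℝ) → ℝ}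
    {f' : Fin (n + 1) → (Fin (n + 1) → ℝ) → (Fin (n + 1) → ℝ) →L[ℝ] ℝ}
    {lo hi : Fin (n + 1) → ℝ} {M S : ℝ} (hle : lo ≤ hi) (hS : ∀ j, hi j - lo j ≤ S)
    (hf : ∀ x ∈ Icc lo hi, ∀ i, HasFDerivAt (f i) (f' i x) x)
    (hint : IntegrableOn (fun x => ∑ i, f' i x (Pi.single i 1)) (Icc lo hi))
    (hM : ∀ x ∈ Icc lo hi, ∀ i, |f i x| ≤ M) :
    |∫ x in Icc lo hi, ∑ i, f' i x (Pi.single i 1)| ≤ (n + 1) * (2 * (M * S ^ n)) := by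
  rw [integral_divergence_of_hasFDerivAt_off_countable' lo hi hle f f' ∅ countable_empty
    (fun i x hx => (hf x hx i).continuousAt.continuousWithinAt)
    (fun x hx => hf x ⟨fun j => (hx.1 j trivial).1.le, fun j => (hx.1 j trivial).2.le⟩) hint]
  have hface : ∀ i, ∀ z ∈ Icc (lo i) (hi i),
      |∫ x in Icc (lo ∘ i.succAbove) (hi ∘ i.succAbove), f i (i.insertNth z x)| ≤ M * S ^ n :=
    fun i z hz => abs_setIntegral_insertNth_le hle hS (fun x hx => hM x hx i) i hz
  calc _ ≤ ∑ _i : Fin (n + 1), 2 * (M * S ^ n) := by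
        refine (Finset.abs_sum_le_sum_abs _ _).trans (Finset.sum_le_sum fun i _ => ?_)
        refine (abs_sub _ _).trans ?_
        linarith [hface i (hi i) ⟨hle i, le_rfl⟩, hface i (lo i) ⟨le_rfl, hle i⟩]
    _ = (n + 1) * (2 * (M * S ^ n)) := by simp

theorem abs_mul_setIntegral_pd_zero_div_le {k : ℕ} {a M S : ℝ} {D : Set (Fin (k + 1) → ℝ)}
    (hD : IsOpen D) {u g : (Fin (k + 1) → ℝ) → ℝ} (hu : ContDiffOn ℝ 2 u D)
    (hg : IntegrableOn g D) (heq : ∀ x ∈ D, weinstein a u x = g x) {lo hi : Fin (k + 1) → ℝ}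
    (hle : lo ≤ hi) (hS : ∀ j, hi j - lo j ≤ S) (hsub : Icc lo hi ⊆ D) (hlo : 0 < lo 0)
    (hM : ∀ x ∈ Icc lo hi, ∀ i, |pd i u x| ≤ M) :
    |a| * |∫ x in Icc lo hi, pd 0 u x / x 0| ≤
      (∫ x in D, |g x|) + (k + 1) * (2 * (M * S ^ k)) := by
  have hpd : ∀ i, ContDiffOn ℝ 1 (pd i u) D := fun i =>
    (hu.fderiv_of_isOpen hD (by norm_num)).clm_apply contDiffOn_const
  have hq : IntegrableOn (fun x => pd 0 u x / x 0) (Icc lo hi) :=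
    (((hpd 0).continuousOn.mono hsub).div (continuous_apply 0).continuousOn
      fun x hx => (hlo.trans_le (hx.1 0)).ne').integrableOn_compact isCompact_Icc
  have hgQ : IntegrableOn g (Icc lo hi) := hg.mono_set hsub
  have hdiv : EqOn (fun x => g x - a * (pd 0 u x / x 0)) (fun x => ∑ i, pd i (pd i u) x)
      (Icc lo hi) := by
    intro x hx
    dsimp only
    rw [← heq x (hsub hx), weinstein]
    ring
  have hflux := abs_setIntegral_divergence_le (f := fun i => pd i u)
    (f' := fun i x => fderiv ℝ (pd i u) x) hle hS
    (fun x hx i => (((hpd i).differentiableOn one_ne_zero).differentiableAt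
      (hD.mem_nhds (hsub hx))).hasFDerivAt)
    ((hgQ.sub (hq.const_mul a)).congr_fun hdiv measurableSet_Icc) hM
  have hbalance : a * ∫ x in Icc lo hi, pd 0 u x / x 0 =
      (∫ x in Icc lo hi, g x) - ∫ x in Icc lo hi, ∑ i, pd i (pd i u) x := by
    rw [← setIntegral_congr_fun measurableSet_Icc hdiv, integral_sub hgQ (hq.const_mul a),
      integral_const_mul]
    ring
  have hgD : |∫ x in Icc lo hi, g x| ≤ ∫ x in D, |g x| :=
    abs_integral_le_integral_abs.trans (setIntegral_mono_set hg.abs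
      (Eventually.of_forall fun _ => abs_nonneg _) hsub.eventuallyLE)
  rw [← abs_mul, hbalance]
  exact (abs_sub _ _).trans (add_le_add hgD hflux)

theorem mul_log_sub_log_le_mul_setIntegral_div {k : ℕ} {f : (Fin (k + 1) → ℝ) → ℝ}
    {c m ε δ : ℝ} {y : Fin k → ℝ} (hε : 0 < ε) (hεδ : ε ≤ δ)
    (hf : ContinuousOn f (Set.Icc (Fin.cons ε fun i => y i - δ) (Fin.cons δ fun i => y i + δ)))
    (hm : ∀ x ∈ Set.Icc (Fin.cons ε fun i => y i - δ) (Fin.cons δ fun i => y i + δ),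
      m ≤ c * f x) :
    m * (Real.log δ - Real.log ε) * (2 * δ) ^ k ≤
      c * ∫ x in Icc (Fin.cons ε fun i => y i - δ) (Fin.cons δ fun i => y i + δ), f x / x 0 := by
  set Q := Icc (Fin.cons ε fun i => y i - δ) (Fin.cons δ fun i => y i + δ : Fin (k + 1) → ℝ)
  have hx0 : ∀ x ∈ Q, 0 < x 0 := fun x hx => hε.trans_le (hx.1 0)
  have hcont0 : ContinuousOn (fun x : Fin (k + 1) → ℝ => x 0) Q := (continuous_apply 0).continuousOn
  have hvol : volume.real (Icc (fun i => y i - δ) (fun i => y i + δ)) = (2 * δ) ^ k := by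
    simpa using volume_real_Icc_sub_add y (hε.le.trans hεδ)
  rw [← setIntegral_Icc_const_div hε hεδ, ← hvol, ← setIntegral_Icc_cons_apply_zero,
    ← integral_const_mul]
  refine setIntegral_mono_on
    ((continuousOn_const.div hcont0 fun x hx => (hx0 x hx).ne').integrableOn_compact isCompact_Icc)
    (((hf.div hcont0 fun x hx => (hx0 x hx).ne').integrableOn_compact isCompact_Icc).const_mul c)
    measurableSet_Icc fun x hx => ?_
  rw [← mul_div_assoc]
  exact div_le_div_of_nonneg_right (hm x hx) (hx0 x hx).le

theorem exists_forall_mem_Icc_cons_dist_lt {k : ℕ} {E : Type*} [PseudoMetricSpace E]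
    {D : Set (Fin (k + 1) → ℝ)} {F : (Fin (k + 1) → ℝ) → E} {y : Fin k → ℝ} {L : E}
    (hyD : ∀ᶠ x in 𝓝 (Fin.cons 0 y : Fin (k + 1) → ℝ), 0 < x 0 → x ∈ D)
    (hF : Tendsto F (𝓝[D] Fin.cons 0 y) (𝓝 L)) {r : ℝ} (hr : 0 < r) :
    ∃ δ > 0, ∀ ε > 0,
      ∀ x ∈ Set.Icc (Fin.cons ε fun i => y i - δ) (Fin.cons δ fun i => y i + δ : Fin (k + 1) → ℝ),
        x ∈ D ∧ dist (F x) L < r := by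
  obtain ⟨η, hη, hnear⟩ : ∃ η > 0, ∀ ⦃x⦄, dist x (Fin.cons 0 y : Fin (k + 1) → ℝ) < η →
      0 < x 0 → x ∈ D ∧ dist (F x) L < r := Metric.eventually_nhds_iff.1 <| by
    filter_upwards [hyD, eventually_nhdsWithin_iff.1 (Metric.tendsto_nhds.1 hF r hr)]
      with x hxD hxF hx0 using ⟨hxD hx0, hxF (hxD hx0)⟩
  refine ⟨η / 2, half_pos hη, fun ε hε x hx => hnear ?_ (hε.trans_le (hx.1 0))⟩
  refine lt_of_le_of_lt (Icc_subset_closedBall_pi (half_pos hη).le ?_ ?_ hx) (half_lt_self hη)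
  · exact Fin.forall_fin_succ.2 ⟨by simp only [Fin.cons_zero]; linarith, fun i => by simp⟩
  · exact Fin.forall_fin_succ.2 ⟨by simp, fun i => by simp⟩

theorem apply_single_zero_eq_zero_of_tendsto_fderiv {k : ℕ} {a : ℝ} (ha : a ≠ 0)
    {D : Set (Fin (k + 1) → ℝ)} (hD : IsOpen D) {u g : (Fin (k + 1) → ℝ) → ℝ}
    (hu : ContDiffOn ℝ 2 u D) (hg : IntegrableOn g D) (heq : ∀ x ∈ D, weinstein a u x = g x)
    {y : Fin k → ℝ} (hyD : ∀ᶠ x in 𝓝 (Fin.cons 0 y : Fin (k + 1) → ℝ), 0 < x 0 → x ∈ D)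
    {L : (Fin (k + 1) → ℝ) →L[ℝ] ℝ} (hL : Tendsto (fderiv ℝ u) (𝓝[D] Fin.cons 0 y) (𝓝 L)) :
    L (Pi.single 0 1) = 0 := by
  set c := L (Pi.single 0 1)
  by_contra hc
  have hc0 : 0 < |c| := abs_pos.2 hc
  obtain ⟨δ, hδ, hQ⟩ := exists_forall_mem_Icc_cons_dist_lt hyD hL (half_pos hc0)
  set C := (∫ x in D, |g x|) + (k + 1) * (2 * ((‖L‖ + |c| / 2) * (2 * δ) ^ k))
  obtain ⟨ε, ⟨hε0, hεδ⟩, hlarge⟩ :=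
    exists_lt_mul_log_sub_log (K := |a| * (c ^ 2 / 2) * (2 * δ) ^ k) (by positivity) hδ (|c| * C)
  set Q := Icc (Fin.cons ε fun i => y i - δ) (Fin.cons δ fun i => y i + δ : Fin (k + 1) → ℝ)
  have hQD : Q ⊆ D := fun x hx => (hQ ε hε0 x hx).1
  have hnear : ∀ x ∈ Q, ‖fderiv ℝ u x - L‖ ≤ |c| / 2 := fun x hx =>
    (dist_eq_norm (fderiv ℝ u x) L ▸ (hQ ε hε0 x hx).2).le
  have hupper := abs_mul_setIntegral_pd_zero_div_le (M := ‖L‖ + |c| / 2) (S := 2 * δ)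
    hD hu hg heq (Fin.cons_le_cons.2 ⟨hεδ.le, fun i => by linarith⟩)
    (Fin.forall_fin_succ.2 ⟨by simp only [Fin.cons_zero]; linarith,
      fun i => by simp only [Fin.cons_succ]; linarith⟩)
    hQD hε0 fun x hx i => (abs_apply_single_le_opNorm _ i).trans <|
      (norm_le_norm_add_norm_sub' _ L).trans (by linarith [hnear x hx])
  have hlower := mul_log_sub_log_le_mul_setIntegral_div (c := c) (m := c ^ 2 / 2) hε0 hεδ.le
    (((hu.continuousOn_fderiv_of_isOpen hD (by norm_num)).clm_apply continuousOn_const).mono hQD)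
    fun x hx => sq_div_two_le_mul_apply_single (hnear x hx)
  set J := ∫ x in Q, pd 0 u x / x 0
  have hbounded : |a| * (c ^ 2 / 2) * (2 * δ) ^ k * (Real.log δ - Real.log ε) ≤ |c| * C :=
    calc _ = |a| * (c ^ 2 / 2 * (Real.log δ - Real.log ε) * (2 * δ) ^ k) := by ring
      _ ≤ |a| * (c * J) := mul_le_mul_of_nonneg_left hlower (abs_nonneg a)
      _ ≤ |a| * (|c| * |J|) :=
        mul_le_mul_of_nonneg_left ((le_abs_self _).trans (abs_mul c J).le) (abs_nonneg a)
      _ = |c| * (|a| * |J|) := by ring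
      _ ≤ |c| * C := mul_le_mul_of_nonneg_left hupper (abs_nonneg c)
  linarith

theorem stmt_18 (a : ℝ) (ha : a ≠ 0) (k : ℕ) (R : ℝ) (hR : 0 < R)
    (b₀ b₁ : ℝ) (hb : b₀ < b₁)
    (D : Set (Fin (k + 1) → ℝ))
    (hD : D = {x | x 0 ∈ Ioo 0 R ∧ ∀ i : Fin k, x i.succ ∈ Ioo b₀ b₁})
    (u : (Fin (k + 1) → ℝ) → ℝ) (g : (Fin (k + 1) → ℝ) → ℝ)
    (huC2 : ContDiffOn ℝ 2 u D) (huC1 : ContDiffOn ℝ 1 u (closure D))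
    (hg : IntegrableOn g D) (heq : ∀ x ∈ D, weinstein a u x = g x) :
    ∀ y : Fin k → ℝ, (∀ i, y i ∈ Ioo b₀ b₁) →
      Tendsto (fun r : ℝ => pd 0 u (Fin.cons r y)) (nhdsWithin 0 (Ioi 0)) (nhds 0) ∧
      pdWithin (closure D) 0 u (Fin.cons 0 y) = 0 := by
  intro y hy
  set lo : Fin (k + 1) → ℝ := Fin.cons 0 fun _ => b₀
  set hi : Fin (k + 1) → ℝ := Fin.cons R fun _ => b₁
  have hlt : ∀ i, lo i < hi i := Fin.forall_fin_succ.2 ⟨hR, fun _ => hb⟩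
  have hDpi : D = univ.pi fun i => Ioo (lo i) (hi i) := by
    ext x
    simp [hD, Fin.forall_fin_succ, lo, hi]
  have hDo : IsOpen D := hDpi ▸ isOpen_set_pi finite_univ fun _ _ => isOpen_Ioo
  have hcl : closure D = Icc lo hi := hDpi ▸ closure_pi_univ_Ioo hlt
  have hyD : ∀ᶠ x in 𝓝 (Fin.cons 0 y : Fin (k + 1) → ℝ), 0 < x 0 → x ∈ D :=
    hDpi ▸ eventually_mem_pi_Ioo_of_lt_apply_zero (hlt 0) hy
  have hL := tendsto_fderiv_nhdsWithin_of_contDiffOn_closure hDo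
    (hcl ▸ uniqueDiffOn_Icc_pi hlt) huC1
    (by rw [hcl]; exact ⟨Fin.cons_le_cons.2 ⟨le_rfl, fun i => (hy i).1.le⟩,
      Fin.cons_le_cons.2 ⟨hR.le, fun i => (hy i).2.le⟩⟩)
  have hc : pdWithin (closure D) 0 u (Fin.cons 0 y) = 0 :=
    apply_single_zero_eq_zero_of_tendsto_fderiv ha hDo huC2 hg heq hyD hL
  refine ⟨?_, hc⟩
  have hlim : Tendsto (fun r : ℝ => pd 0 u (Fin.cons r y)) (𝓝[>] 0)
      (𝓝 (pdWithin (closure D) 0 u (Fin.cons 0 y))) :=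
    ((ContinuousLinearMap.apply ℝ ℝ (Pi.single 0 1)).continuous.tendsto _).comp
      (hL.comp (tendsto_finCons_nhdsWithin hyD))
  rwa [hc] at hlim
end
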